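/- For positive integers j, k, ℓ with j < k and 3 ≤ ℓ ≤ j + 2, the number of compositions of 2k + j into ℓ parts with at least two parts equal to k is ((ℓ² - ℓ)/2) * C(j - 1, ℓ - 3). -/
import Mathlib

open Finset

/-- Reindexing compositions along an equiv. -/
def compReindex {α β : Type*} [Fintype α] [Fintype β] (e : α ≃ β) (n : ℕ) :
    {y : α → ℕ // (∑ a, y a) = n ∧ ∀ a, 0 < y a} ≃
      {y : β → ℕ // (∑ b, y b) = n ∧ ∀ b, 0 < y b} where
  toFun := fun ⟨y, hs, hp⟩ => ⟨fun b => y (e.symm b), by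
    rw [← hs]; exact Fintype.sum_equiv e.symm (fun b => y (e.symm b)) y (fun b => rfl),
    fun b => hp _⟩
  invFun := fun ⟨y, hs, hp⟩ => ⟨fun a => y (e a), by
    rw [← hs]; exact Fintype.sum_equiv e (fun a => y (e a)) y (fun a => rfl),
    fun a => hp _⟩
  left_inv := fun ⟨y, hs, hp⟩ => by ext a; simp
  right_inv := fun ⟨y, hs, hp⟩ => by ext b; simp

/-- Stars and bars for positive compositions. -/
lemma card_pos_comp (α : Type*) [Fintype α] [DecidableEq α] (n : ℕ)
    (hm : 0 < Fintype.card α) (hmn : Fintype.card α ≤ n) :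
    Nat.card {y : α → ℕ // (∑ a, y a) = n ∧ ∀ a, 0 < y a}
      = (n - 1).choose (Fintype.card α - 1) := by
  have hcard : ∑ _a : α, 1 = Fintype.card α := by
    rw [Finset.sum_const, Finset.card_univ, smul_eq_mul, mul_one]
  have e1 : {y : α → ℕ // (∑ a, y a) = n ∧ ∀ a, 0 < y a} ≃
      {P : α → ℕ // ∑ i, P i = n - Fintype.card α} := by
    refine ⟨fun ⟨y, hs, hp⟩ => ⟨fun a => y a - 1, ?_⟩,
      fun ⟨P, hs⟩ => ⟨fun a => P a + 1, ?_, fun a => by positivity⟩,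
      fun ⟨y, hs, hp⟩ => ?_, fun ⟨P, hs⟩ => ?_⟩
    · have key : ∑ a, (y a - 1) + ∑ _a : α, 1 = n := by
        rw [← Finset.sum_add_distrib, ← hs]
        exact Finset.sum_congr rfl fun a _ => by have := hp a; omega
      rw [hcard] at key
      show ∑ a, (y a - 1) = n - Fintype.card α
      omega
    · show ∑ a, (P a + 1) = n
      rw [Finset.sum_add_distrib, hs, hcard]
      omega
    · ext a; have := hp a; simp; omega
    · ext a; simp
  rw [Nat.card_congr e1,
    Nat.card_congr (Sym.equivNatSumOfFintype α (n - Fintype.card α)).symm,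
    Nat.card_eq_fintype_card, Sym.card_sym_eq_choose]
  have h1 : Fintype.card α + (n - Fintype.card α) - 1 = n - 1 := by omega
  rw [h1, ← Nat.choose_symm (by omega : n - Fintype.card α ≤ n - 1)]
  congr 1
  omega

lemma card_lt_pairs (ℓ : ℕ) :
    Nat.card {p : Fin ℓ × Fin ℓ // p.1 < p.2} = (ℓ ^ 2 - ℓ) / 2 := by
  have e : {z : Sym2 (Fin ℓ) // ¬ z.IsDiag} ≃ {p : Fin ℓ × Fin ℓ // p.1 < p.2} := by
    refine (Sym2.sortEquiv.subtypeEquiv fun z => ?_).trans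
      (Equiv.subtypeSubtypeEquivSubtype fun {p} (h : p.1 < p.2) => le_of_lt h)
    induction z using Sym2.ind with
    | _ a b =>
      simp only [Sym2.sortEquiv_apply_coe, Sym2.inf_mk, Sym2.sup_mk, Sym2.isDiag_iff_proj_eq]
      constructor
      · intro h; exact lt_of_le_of_ne inf_le_sup (by simpa using h)
      · intro h hab; subst hab; simp at h
  rw [← Nat.card_congr e, Nat.card_eq_fintype_card, Sym2.card_subtype_not_diag,
    Fintype.card_fin, Nat.choose_two_right]
  congr 1
  rw [sq, Nat.mul_sub_one]

def fiberEquiv (j k : ℕ) {ℓ : ℕ} (hk : 0 < k) (a b : Fin ℓ) (hab : a ≠ b) :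
    {x : Fin ℓ → ℕ // (∑ c, x c) = 2 * k + j ∧ (∀ c, 0 < x c) ∧ x a = k ∧ x b = k} ≃
      {y : {c : Fin ℓ // c ≠ a ∧ c ≠ b} → ℕ // (∑ c, y c) = j ∧ ∀ c, 0 < y c} where
  toFun := fun ⟨x, hs, hp, ha, hb⟩ => ⟨fun c => x c.1, by
    have hsub : ({a, b} : Finset (Fin ℓ)) ⊆ Finset.univ := Finset.subset_univ _
    have hsplit : ∑ c, x c = ∑ c ∈ (Finset.univ \ {a, b}), x c + ∑ c ∈ ({a, b} : Finset (Fin ℓ)), x c :=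
      (Finset.sum_sdiff hsub).symm
    have hpair : ∑ c ∈ ({a, b} : Finset (Fin ℓ)), x c = 2 * k := by
      rw [Finset.sum_pair hab, ha, hb]; ring
    have hsub2 : ∑ c ∈ (Finset.univ \ {a, b}), x c
        = ∑ c : {c : Fin ℓ // c ≠ a ∧ c ≠ b}, x c.1 := by
      refine Finset.sum_subtype _ (fun c => ?_) x
      simp [and_comm]
    constructor
    · rw [← hsub2]
      omega
    · exact fun c => hp c.1⟩
  invFun := fun ⟨y, hs, hp⟩ =>
    ⟨fun c => if h1 : c = a then k else if h2 : c = b then k else y ⟨c, h1, h2⟩, by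
    have ha : (fun c => if h1 : c = a then k else if h2 : c = b then k
        else y ⟨c, h1, h2⟩) a = k := by simp
    have hb : (fun c => if h1 : c = a then k else if h2 : c = b then k
        else y ⟨c, h1, h2⟩) b = k := by
      simp [Ne.symm hab]
    refine ⟨?_, fun c => ?_, ha, hb⟩
    · have hsub : ({a, b} : Finset (Fin ℓ)) ⊆ Finset.univ := Finset.subset_univ _
      rw [← Finset.sum_sdiff hsub, Finset.sum_pair hab, dif_pos rfl,
        dif_neg (Ne.symm hab), dif_pos rfl]
      have hsub2 : ∑ c ∈ (Finset.univ \ {a, b}),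
          (fun c => if h1 : c = a then k else if h2 : c = b then k else y ⟨c, h1, h2⟩) c
          = ∑ c : {c : Fin ℓ // c ≠ a ∧ c ≠ b},
            (fun c => if h1 : c = a then k else if h2 : c = b then k else y ⟨c, h1, h2⟩) c.1 := by
        refine Finset.sum_subtype _ (fun c => ?_) _
        simp [and_comm]
      rw [hsub2]
      have : ∑ c : {c : Fin ℓ // c ≠ a ∧ c ≠ b},
          (fun c => if h1 : c = a then k else if h2 : c = b then k else y ⟨c, h1, h2⟩) c.1
          = ∑ c, y c := by
        refine Finset.sum_congr rfl fun c _ => ?_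
        simp [c.2.1, c.2.2]
      rw [this, hs]
      ring
    · dsimp only
      split
      · exact hk
      · split
        · exact hk
        · exact hp _⟩
  left_inv := fun ⟨x, hs, hp, ha, hb⟩ => by
    ext c
    dsimp only
    split
    · next h => rw [h, ha]
    · split
      · next h => rw [h, hb]
      · rfl
  right_inv := fun ⟨y, hs, hp⟩ => by
    ext c
    simp [c.2.1, c.2.2]

lemma card_ne_two {ℓ : ℕ} (a b : Fin ℓ) (hab : a ≠ b) :
    Fintype.card {c : Fin ℓ // c ≠ a ∧ c ≠ b} = ℓ - 2 := by
  rw [Fintype.card_subtype]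
  have h : (Finset.univ.filter fun c => c ≠ a ∧ c ≠ b) = Finset.univ \ {a, b} := by
    ext c; simp [and_comm]
  rw [h, Finset.card_sdiff_of_subset (Finset.subset_univ _), Finset.card_pair hab, Finset.card_univ,
    Fintype.card_fin]

/-- Compositions of `2k + j` into `ℓ` parts with at least two parts equal to `k`. -/
theorem stmt_8 (j k ℓ : ℕ) (hj : 0 < j) (hjk : j < k) (h3 : 3 ≤ ℓ) (h4 : ℓ ≤ j + 2) :
    Nat.card {x : Fin ℓ → ℕ // (∑ a, x a) = 2 * k + j ∧ (∀ a, 0 < x a) ∧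
        ∃ a b, a ≠ b ∧ x a = k ∧ x b = k}
      = ((ℓ ^ 2 - ℓ) / 2) * Nat.choose (j - 1) (ℓ - 3) := by
  have hk : 0 < k := hj.trans hjk
  -- uniqueness of the pair of k-positions
  have L1 : ∀ (x : Fin ℓ → ℕ), (∑ c, x c) = 2 * k + j → (∀ c, 0 < x c) →
      ∀ a b c : Fin ℓ, a ≠ b → x a = k → x b = k → x c = k → c = a ∨ c = b := by
    intro x hs hp a b c hab ha hb hc
    by_contra h
    push_neg at h
    obtain ⟨hca, hcb⟩ := h
    have h1 : ∑ d ∈ ({c, a, b} : Finset (Fin ℓ)), x d = 3 * k := by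
      rw [Finset.sum_insert (by simp [hca, hcb]), Finset.sum_pair hab, ha, hb, hc]; ring
    have hle : ∑ d ∈ ({c, a, b} : Finset (Fin ℓ)), x d ≤ ∑ d, x d :=
      Finset.sum_le_sum_of_subset (Finset.subset_univ _)
    omega
  set T : {p : Fin ℓ × Fin ℓ // p.1 < p.2} → Type := fun p =>
    {x : Fin ℓ → ℕ // (∑ c, x c) = 2 * k + j ∧ (∀ c, 0 < x c) ∧ x p.1.1 = k ∧ x p.1.2 = k}
    with hT
  have e : (Σ p, T p) ≃ {x : Fin ℓ → ℕ // (∑ a, x a) = 2 * k + j ∧ (∀ a, 0 < x a) ∧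
      ∃ a b, a ≠ b ∧ x a = k ∧ x b = k} := by
    refine Equiv.ofBijective
      (fun s => ⟨s.2.1, s.2.2.1, s.2.2.2.1, s.1.1.1, s.1.1.2, Fin.ne_of_lt s.1.2,
        s.2.2.2.2.1, s.2.2.2.2.2⟩) ⟨?_, ?_⟩
    · rintro ⟨⟨⟨a, b⟩, hab⟩, ⟨x, hs, hp, ha, hb⟩⟩ ⟨⟨⟨c, d⟩, hcd⟩, ⟨y, hs', hp', hc, hd⟩⟩ h
      have hxy : x = y := congrArg Subtype.val h
      subst hxy
      have h1 : c = a ∨ c = b := L1 x hs hp a b c (Fin.ne_of_lt hab) ha hb hc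
      have h2 : d = a ∨ d = b := L1 x hs hp a b d (Fin.ne_of_lt hab) ha hb hd
      have hca : c = a := by
        rcases h1 with h1 | h1
        · exact h1
        · exfalso
          rcases h2 with h2 | h2
          · exact absurd (hcd.trans_eq h2) (by subst h1; exact fun hh => absurd (hab.trans hh) (lt_irrefl _))
          · subst h1 h2; exact absurd hcd (lt_irrefl _)
      have hdb : d = b := by
        rcases h2 with h2 | h2
        · subst hca h2; exact absurd hcd (lt_irrefl _)
        · exact h2
      subst hca hdb
      rfl
    · rintro ⟨x, hs, hp, a, b, hab, ha, hb⟩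
      rcases lt_or_gt_of_ne hab with h | h
      · exact ⟨⟨⟨(a, b), h⟩, ⟨x, hs, hp, ha, hb⟩⟩, rfl⟩
      · exact ⟨⟨⟨(b, a), h⟩, ⟨x, hs, hp, hb, ha⟩⟩, rfl⟩
  rw [← Nat.card_congr e]
  have e2 : (Σ p, T p) ≃ {p : Fin ℓ × Fin ℓ // p.1 < p.2} ×
      {y : Fin (ℓ - 2) → ℕ // (∑ c, y c) = j ∧ ∀ c, 0 < y c} := by
    refine (Equiv.sigmaCongrRight fun (p : {p : Fin ℓ × Fin ℓ // p.1 < p.2}) =>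
      ((fiberEquiv j k hk p.1.1 p.1.2 (Fin.ne_of_lt p.2)).trans
        (compReindex (Fintype.equivFinOfCardEq
          (card_ne_two p.1.1 p.1.2 (Fin.ne_of_lt p.2))) j))).trans
      (Equiv.sigmaEquivProd _ _)
  rw [Nat.card_congr e2, Nat.card_prod, card_lt_pairs,
    card_pos_comp (Fin (ℓ - 2)) j (by rw [Fintype.card_fin]; omega)
      (by rw [Fintype.card_fin]; omega), Fintype.card_fin]
  congr 1
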